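/- Let L(f, y) be convex and lower-semicontinuous in its first argument f ∈ ℝ. Then for any norm ‖·‖ on ℝ^d, any x, β ∈ ℝ^d, y ∈ ℝ, and δ ≥ 0: max_{‖Δ‖ ≤ δ} L(⟨x+Δ, β⟩, y) = max{ L(⟨x,β⟩ + δ‖β‖_*, y), L(⟨x,β⟩ − δ‖β‖_*, y) }, where ‖·‖_* is the dual norm. -/

import Mathlib

/-!
The inner maximisation only sees `Δ` through the scalar `⟪Δ, β⟫`, which ranges over the interval
`[-δ‖β‖₊, δ‖β‖₊]`, both endpoints being attained because the unit ball of a norm on a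
finite-dimensional space is compact. A convex function of one variable attains its maximum over an
interval at an endpoint.
-/

open RealInnerProductSpace

/-- Dual norm of `y` with respect to the (semi)norm `p`, via the Euclidean pairing. -/
noncomputable def dualNorm {d : ℕ} (p : Seminorm ℝ (EuclideanSpace ℝ (Fin d)))
    (y : EuclideanSpace ℝ (Fin d)) : ℝ :=
  sSup {t | ∃ x, p x ≤ 1 ∧ t = ⟪x, y⟫}

theorem ConvexOn.le_max_of_abs_sub_le {D : Set ℝ} {f : ℝ → ℝ} (hf : ConvexOn ℝ D f)
    {a s t : ℝ} (hplus : a + s ∈ D) (hminus : a - s ∈ D) (ht : |t - a| ≤ s) :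
    f t ≤ max (f (a + s)) (f (a - s)) := by
  have hseg : t ∈ segment ℝ (a - s) (a + s) := by
    rw [segment_eq_Icc (by linarith [(abs_nonneg _).trans ht])]
    constructor <;> linarith [abs_le.mp ht]
  exact max_comm (f (a - s)) _ ▸ hf.le_on_segment hminus hplus hseg

namespace Seminorm

variable {E : Type*} [NormedAddCommGroup E] [NormedSpace ℝ E] [FiniteDimensional ℝ E]
  (p : Seminorm ℝ E)

theorem continuous_of_finiteDimensional : Continuous p :=
  continuousOn_univ.mp (p.convexOn.continuousOn isOpen_univ)

theorem exists_pos_mul_norm_le (hp : ∀ v, p v = 0 → v = 0) : ∃ c > 0, ∀ x, c * ‖x‖ ≤ p x := by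
  have hpos : ∀ u ∈ Metric.sphere (0 : E) 1, 0 < p u := fun u hu =>
    (apply_nonneg p u).lt_of_ne fun h => by simp [hp u h.symm] at hu
  obtain ⟨c, hc, hcp⟩ := (isCompact_sphere (0 : E) 1).exists_forall_le'
    p.continuous_of_finiteDimensional.continuousOn hpos
  refine ⟨c, hc, fun x => ?_⟩
  rcases eq_or_ne x 0 with rfl | hx
  · simp
  have hxn : 0 < ‖x‖ := norm_pos_iff.mpr hx
  have hunit := hcp (‖x‖⁻¹ • x) (by simp [norm_smul, hxn.ne'])
  rw [map_smul_eq_mul, norm_inv, norm_norm, le_inv_mul_iff₀ hxn] at hunit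
  rwa [mul_comm]

theorem isCompact_closedBall_zero (hp : ∀ v, p v = 0 → v = 0) (r : ℝ) :
    IsCompact (p.closedBall 0 r) := by
  obtain ⟨c, hc, hcp⟩ := p.exists_pos_mul_norm_le hp
  rw [closedBall_zero_eq]
  refine Metric.isCompact_of_isClosed_isBounded
    (isClosed_le p.continuous_of_finiteDimensional continuous_const)
    ((Metric.isBounded_closedBall (x := 0) (r := r / c)).subset fun x hx => ?_)
  rw [mem_closedBall_zero_iff, le_div_iff₀ hc, mul_comm]
  exact (hcp x).trans hx

end Seminorm

section DualNorm

variable {d : ℕ} (p : Seminorm ℝ (EuclideanSpace ℝ (Fin d)))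

theorem isGreatest_dualNorm (hp : ∀ v, p v = 0 → v = 0) (β : EuclideanSpace ℝ (Fin d)) :
    IsGreatest {t | ∃ x, p x ≤ 1 ∧ t = ⟪x, β⟫} (dualNorm p β) := by
  have himage : {t | ∃ x, p x ≤ 1 ∧ t = ⟪x, β⟫} = (⟪·, β⟫) '' p.closedBall 0 1 := by
    ext t
    simp [eq_comm]
  rw [dualNorm, himage]
  exact ((p.isCompact_closedBall_zero hp 1).image
    (continuous_id.inner continuous_const)).isGreatest_sSup ⟨_, 0, by simp, rfl⟩

theorem dualNorm_nonneg (hp : ∀ v, p v = 0 → v = 0) (β : EuclideanSpace ℝ (Fin d)) :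
    0 ≤ dualNorm p β :=
  (isGreatest_dualNorm p hp β).2 ⟨0, by simp, by simp⟩

theorem inner_le_mul_dualNorm (hp : ∀ v, p v = 0 → v = 0) (x β : EuclideanSpace ℝ (Fin d)) :
    ⟪x, β⟫ ≤ p x * dualNorm p β := by
  rcases (apply_nonneg p x).eq_or_lt with hx | hx
  · simp [hp x hx.symm]
  have hunit : ⟪(p x)⁻¹ • x, β⟫ ≤ dualNorm p β :=
    (isGreatest_dualNorm p hp β).2 ⟨_, by simp [map_smul_eq_mul, abs_of_pos hx, hx.ne'], rfl⟩
  rwa [real_inner_smul_left, inv_mul_le_iff₀ hx] at hunit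

theorem abs_inner_le_mul_dualNorm (hp : ∀ v, p v = 0 → v = 0) (x β : EuclideanSpace ℝ (Fin d)) :
    |⟪x, β⟫| ≤ p x * dualNorm p β := by
  refine abs_le.mpr ⟨?_, inner_le_mul_dualNorm p hp x β⟩
  have := inner_le_mul_dualNorm p hp (-x) β
  rw [inner_neg_left, map_neg_eq_map] at this
  linarith

end DualNorm

theorem stmt3_general {d : ℕ} (p : Seminorm ℝ (EuclideanSpace ℝ (Fin d)))
    (hp : ∀ v, p v = 0 → v = 0)
    (L : ℝ → ℝ → ℝ) (y : ℝ)
    (hconv : ConvexOn ℝ Set.univ (fun f => L f y))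
    (x β : EuclideanSpace ℝ (Fin d)) (δ : ℝ) (hδ : 0 ≤ δ) :
    IsGreatest {t | ∃ Δ, p Δ ≤ δ ∧ t = L (⟪x + Δ, β⟫) y}
      (max (L (⟪x, β⟫ + δ * dualNorm p β) y) (L (⟪x, β⟫ - δ * dualNorm p β) y)) := by
  obtain ⟨⟨v, hv, hvβ⟩, -⟩ := isGreatest_dualNorm p hp β
  have hδv : p (δ • v) ≤ δ := by
    rw [map_smul_eq_mul, Real.norm_of_nonneg hδ]
    exact mul_le_of_le_one_right hδ hv
  refine ⟨?_, ?_⟩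
  · rcases max_choice (L (⟪x, β⟫ + δ * dualNorm p β) y) (L (⟪x, β⟫ - δ * dualNorm p β) y)
      with h | h <;> rw [h]
    · exact ⟨δ • v, hδv, by rw [inner_add_left, real_inner_smul_left, hvβ]⟩
    · refine ⟨-(δ • v), by rwa [map_neg_eq_map], ?_⟩
      rw [inner_add_left, inner_neg_left, real_inner_smul_left, hvβ, sub_eq_add_neg]
  · rintro _ ⟨Δ, hΔ, rfl⟩
    refine hconv.le_max_of_abs_sub_le trivial trivial ?_
    rw [inner_add_left, add_sub_cancel_left]
    exact (abs_inner_le_mul_dualNorm p hp Δ β).trans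
      (mul_le_mul_of_nonneg_right hΔ (dualNorm_nonneg p hp β))

/-- Tractable reformulation of adversarial training with a linear predictor (Ribeiro et al.,
Theorem 4): for `L` convex and lower semicontinuous in its first argument,
`max_{‖Δ‖ ≤ δ} L(⟨x+Δ, β⟩, y) = max { L(⟨x,β⟩ + δ‖β‖₊, y), L(⟨x,β⟩ − δ‖β‖₊, y) }`,
where `‖·‖₊` is the dual norm. -/
theorem stmt3 {d : ℕ} (p : Seminorm ℝ (EuclideanSpace ℝ (Fin d)))
    (hp : ∀ v, p v = 0 → v = 0)
    (L : ℝ → ℝ → ℝ) (y : ℝ)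
    (hconv : ConvexOn ℝ Set.univ (fun f => L f y))
    (hlsc : LowerSemicontinuous (fun f => L f y))
    (x β : EuclideanSpace ℝ (Fin d)) (δ : ℝ) (hδ : 0 ≤ δ) :
    IsGreatest {t | ∃ Δ, p Δ ≤ δ ∧ t = L (⟪x + Δ, β⟫) y}
      (max (L (⟪x, β⟫ + δ * dualNorm p β) y) (L (⟪x, β⟫ - δ * dualNorm p β) y)) :=
  stmt3_general p hp L y hconv x β δ hδ
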